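/- Let N ≥ 1 and let X(x,y,p₁,p₂) = Σ_{k=0}^{N} Σ_{j=0}^{N−k} f_{j,k}(x,y) p₁^j p₂^{N−k−j}, where the f_{j,k}: ℝ² → ℝ are smooth. Then the Poisson bracket {H, X} vanishes identically on ℝ⁴ if and only if for all integers k, j with 0 ≤ k ≤ N+1 and 0 ≤ j ≤ N−k+1 the determining equations hold identically on ℝ²: 2(∂_x f_{j−1,k} + ∂_y f_{j,k}) = (j+1) f_{j+1,k−2} ∂_x V + (N−k+2−j) f_{j,k−2} ∂_y V, with the convention that f_{j,k} := 0 whenever j < 0, k < 0, or j + k > N. -/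

import Mathlib

noncomputable section

/-- Partial derivative with respect to `x` of a function on `ℝ²`. -/
def pdx (f : ℝ × ℝ → ℝ) : ℝ × ℝ → ℝ := fun q => fderiv ℝ f q (1, 0)

/-- Partial derivative with respect to `y` of a function on `ℝ²`. -/
def pdy (f : ℝ × ℝ → ℝ) : ℝ × ℝ → ℝ := fun q => fderiv ℝ f q (0, 1)

/-- The Poisson bracket on phase space `ℝ⁴` with coordinates `(x, y, p₁, p₂)`:
`{F,G} = F_{p₁} G_x + F_{p₂} G_y − F_x G_{p₁} − F_y G_{p₂}`. -/
def pbr (F G : ℝ × ℝ × ℝ × ℝ → ℝ) : ℝ × ℝ × ℝ × ℝ → ℝ := fun z =>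
  fderiv ℝ F z (0, 0, 1, 0) * fderiv ℝ G z (1, 0, 0, 0)
    + fderiv ℝ F z (0, 0, 0, 1) * fderiv ℝ G z (0, 1, 0, 0)
    - fderiv ℝ F z (1, 0, 0, 0) * fderiv ℝ G z (0, 0, 1, 0)
    - fderiv ℝ F z (0, 1, 0, 0) * fderiv ℝ G z (0, 0, 0, 1)

/-- The classical Hamiltonian `H = p₁² + p₂² + V(x,y)`. -/
def Ham (V : ℝ × ℝ → ℝ) : ℝ × ℝ × ℝ × ℝ → ℝ := fun z =>
  z.2.2.1 ^ 2 + z.2.2.2 ^ 2 + V (z.1, z.2.1)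

/-- The candidate integral `X = Σ_{k=0}^{N} Σ_{j=0}^{N−k} f_{j,k}(x,y) p₁^j p₂^{N−k−j}`. -/
def Xfun (N : ℕ) (f : ℤ → ℤ → ℝ × ℝ → ℝ) : ℝ × ℝ × ℝ × ℝ → ℝ := fun z =>
  ∑ k ∈ Finset.range (N + 1), ∑ j ∈ Finset.range (N - k + 1),
    f (j : ℤ) (k : ℤ) (z.1, z.2.1) * z.2.2.1 ^ j * z.2.2.2 ^ (N - k - j)

/-! Write `q = (x, y)` and `p = (p₁, p₂)`. Since `H_{pᵢ} = 2 pᵢ`, the bracket is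
`{H, X} = 2 p₁ X_x + 2 p₂ X_y − V_x X_{p₁} − V_y X_{p₂}`, again a polynomial in `p` with
coefficients depending on `q`. Indexing `X = Σ g_{a,b}(q) p₁^a p₂^b` by the exponents,
`g_{a,b} = f_{a, N−a−b}`, multiplication by `pᵢ` and differentiation in `pᵢ` only shift the
coefficient array, so the coefficient of `p₁^a p₂^b` in `{H, X}` is the determining expression
with `j = a`, `k = N + 1 − a − b`. A real polynomial in two variables vanishes identically iff all
of its coefficients vanish. -/

open Finset

section PowerSum

variable (c : ℤ → ℝ) (M : ℕ) (p : ℝ)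

lemma mul_sum_range_pow_eq_shift (h₀ : c (-1) = 0) (hM : c ((M : ℤ) - 1) = 0) :
    p * ∑ a ∈ range M, c a * p ^ a = ∑ a ∈ range M, c ((a : ℤ) - 1) * p ^ a := by
  cases M with
  | zero => simp
  | succ M =>
    rw [sum_range_succ' (fun a : ℕ => c ((a : ℤ) - 1) * p ^ a), sum_range_succ _ M, mul_add,
      mul_sum]
    push_cast at hM ⊢
    simp only [add_sub_cancel_right] at hM ⊢
    simp only [hM, h₀, zero_mul, mul_zero, add_zero]
    exact sum_congr rfl fun a _ => by ring

lemma sum_range_mul_deriv_pow_eq_shift (hM : c M = 0) :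
    ∑ a ∈ range M, c a * (a * p ^ (a - 1)) =
      ∑ a ∈ range M, ((a : ℝ) + 1) * c (a + 1) * p ^ a := by
  cases M with
  | zero => simp
  | succ M =>
    rw [sum_range_succ', sum_range_succ _ M]
    push_cast at hM ⊢
    simp only [hM, zero_mul, mul_zero, add_zero]
    exact sum_congr rfl fun a _ => by ring

lemma eq_zero_of_forall_sum_range_pow_eq_zero (h : ∀ p : ℝ, ∑ a ∈ range M, c a * p ^ a = 0)
    {a : ℕ} (ha : a < M) : c a = 0 := by
  have hP : ∑ a ∈ range M, Polynomial.C (c a) * Polynomial.X ^ a = 0 :=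
    Polynomial.funext fun p => by simpa [Polynomial.eval_finsetSum] using h p
  simpa [Polynomial.finsetSum_coeff, Polynomial.coeff_C_mul, Polynomial.coeff_X_pow, ha]
    using congrArg (Polynomial.coeff · a) hP

end PowerSum

/-- The coefficient array is indexed by `ℤ` so that shifted arrays such as `c (a - 1) b` need no
truncated subtraction. -/
def boxSum (M : ℕ) (c : ℤ → ℤ → ℝ) (p r : ℝ) : ℝ :=
  ∑ a ∈ range M, ∑ b ∈ range M, c a b * p ^ a * r ^ b

section BoxSum

variable (M : ℕ) (c : ℤ → ℤ → ℝ) (p r : ℝ)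

lemma boxSum_comm : boxSum M c p r = boxSum M (fun a b => c b a) r p := by
  rw [boxSum, boxSum, sum_comm]
  exact sum_congr rfl fun _ _ => sum_congr rfl fun _ _ => mul_right_comm _ _ _

lemma boxSum_eq_sum_range_pow :
    boxSum M c p r = ∑ a ∈ range M, (∑ b ∈ range M, c a b * r ^ b) * p ^ a := by
  simp only [boxSum, sum_mul]
  exact sum_congr rfl fun _ _ => sum_congr rfl fun _ _ => mul_right_comm _ _ _

lemma mul_boxSum_eq_shift_left (h₀ : ∀ b, c (-1) b = 0) (hM : ∀ b, c ((M : ℤ) - 1) b = 0) :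
    p * boxSum M c p r = boxSum M (fun a b => c (a - 1) b) p r := by
  simp only [boxSum_eq_sum_range_pow]
  exact mul_sum_range_pow_eq_shift (fun a => ∑ b ∈ range M, c a b * r ^ b) M p
    (by simp [h₀]) (by simp [hM])

lemma mul_boxSum_eq_shift_right (h₀ : ∀ a, c a (-1) = 0) (hM : ∀ a, c a ((M : ℤ) - 1) = 0) :
    r * boxSum M c p r = boxSum M (fun a b => c a (b - 1)) p r := by
  rw [boxSum_comm, mul_boxSum_eq_shift_left M _ r p h₀ hM, boxSum_comm]

lemma sum_mul_deriv_pow_left_eq_boxSum (hM : ∀ b, c M b = 0) :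
    ∑ a ∈ range M, ∑ b ∈ range M, c a b * (a * p ^ (a - 1)) * r ^ b
      = boxSum M (fun a b => (a + 1) * c (a + 1) b) p r := by
  calc _ = ∑ a ∈ range M, (∑ b ∈ range M, c a b * r ^ b) * (a * p ^ (a - 1)) := by
        simp only [sum_mul]
        exact sum_congr rfl fun _ _ => sum_congr rfl fun _ _ => by ring
    _ = ∑ a ∈ range M, ((a : ℝ) + 1) * (∑ b ∈ range M, c (a + 1) b * r ^ b) * p ^ a :=
        sum_range_mul_deriv_pow_eq_shift (fun a => ∑ b ∈ range M, c a b * r ^ b) M p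
          (by simp [hM])
    _ = _ := by
        simp only [boxSum, mul_sum, sum_mul]
        exact sum_congr rfl fun _ _ => sum_congr rfl fun _ _ => by push_cast; ring

lemma sum_mul_deriv_pow_right_eq_boxSum (hM : ∀ a, c a M = 0) :
    ∑ a ∈ range M, ∑ b ∈ range M, c a b * p ^ a * (b * r ^ (b - 1))
      = boxSum M (fun a b => (b + 1) * c a (b + 1)) p r := by
  rw [boxSum_comm, ← sum_mul_deriv_pow_left_eq_boxSum M (fun a b => c b a) r p hM, sum_comm]
  exact sum_congr rfl fun _ _ => sum_congr rfl fun _ _ => mul_right_comm _ _ _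

lemma forall_boxSum_eq_zero_iff :
    (∀ p r, boxSum M c p r = 0) ↔ ∀ a < M, ∀ b < M, c a b = 0 := by
  refine ⟨fun h a ha b hb => ?_, fun h p r => ?_⟩
  · refine eq_zero_of_forall_sum_range_pow_eq_zero (fun b => c a b) M (fun r => ?_) hb
    refine eq_zero_of_forall_sum_range_pow_eq_zero (fun a => ∑ b ∈ range M, c a b * r ^ b) M
      (fun p => ?_) ha
    rw [← boxSum_eq_sum_range_pow, h]
  · exact sum_eq_zero fun a ha => sum_eq_zero fun b hb => by
      simp [h a (mem_range.1 ha) b (mem_range.1 hb)]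

end BoxSum

lemma hasFDerivAt_position (z : ℝ × ℝ × ℝ × ℝ) :
    HasFDerivAt (fun z : ℝ × ℝ × ℝ × ℝ => (z.1, z.2.1))
      ((ContinuousLinearMap.fst ℝ ℝ _).prod
        ((ContinuousLinearMap.fst ℝ ℝ _).comp (ContinuousLinearMap.snd ℝ ℝ _))) z :=
  hasFDerivAt_fst.prodMk hasFDerivAt_snd.fst

lemma hasFDerivAt_momentum (z : ℝ × ℝ × ℝ × ℝ) :
    HasFDerivAt (fun z : ℝ × ℝ × ℝ × ℝ => z.2.2)
      ((ContinuousLinearMap.snd ℝ ℝ _).comp (ContinuousLinearMap.snd ℝ ℝ _)) z :=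
  (hasFDerivAt_snd (𝕜 := ℝ) (E := ℝ) (F := ℝ × ℝ × ℝ)).snd

lemma fderiv_coeff_mul_pow_mul_pow_apply {G : ℝ × ℝ → ℝ} (hG : Differentiable ℝ G) (a b : ℕ)
    (z e : ℝ × ℝ × ℝ × ℝ) :
    fderiv ℝ (fun z : ℝ × ℝ × ℝ × ℝ => G (z.1, z.2.1) * z.2.2.1 ^ a * z.2.2.2 ^ b) z e =
      fderiv ℝ G (z.1, z.2.1) (e.1, e.2.1) * z.2.2.1 ^ a * z.2.2.2 ^ b
        + G (z.1, z.2.1) * (a * z.2.2.1 ^ (a - 1)) * z.2.2.2 ^ b * e.2.2.1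
        + G (z.1, z.2.1) * z.2.2.1 ^ a * (b * z.2.2.2 ^ (b - 1)) * e.2.2.2 := by
  have h : HasFDerivAt (fun z : ℝ × ℝ × ℝ × ℝ => G (z.1, z.2.1) * z.2.2.1 ^ a * z.2.2.2 ^ b) _ z :=
    (((hG _).hasFDerivAt.comp z (hasFDerivAt_position z)).mul
      ((hasFDerivAt_momentum z).fst.pow a)).mul ((hasFDerivAt_momentum z).snd.pow b)
  rw [h.fderiv]
  simp only [Pi.mul_apply, Function.comp_apply, nsmul_eq_mul, smul_add,
    add_apply, smul_apply, ContinuousLinearMap.comp_apply,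
    ContinuousLinearMap.coe_fst', ContinuousLinearMap.coe_snd', ContinuousLinearMap.prod_apply,
    smul_eq_mul]
  ring

lemma fderiv_boxSum_apply {M : ℕ} {G : ℤ → ℤ → ℝ × ℝ → ℝ}
    (hG : ∀ a b, Differentiable ℝ (G a b)) (hM₁ : ∀ b, G M b = 0) (hM₂ : ∀ a, G a M = 0)
    (z e : ℝ × ℝ × ℝ × ℝ) :
    fderiv ℝ (fun z : ℝ × ℝ × ℝ × ℝ =>
        boxSum M (fun a b => G a b (z.1, z.2.1)) z.2.2.1 z.2.2.2) z e =
      boxSum M (fun a b => fderiv ℝ (G a b) (z.1, z.2.1) (e.1, e.2.1)) z.2.2.1 z.2.2.2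
        + e.2.2.1 * boxSum M (fun a b => (a + 1) * G (a + 1) b (z.1, z.2.1)) z.2.2.1 z.2.2.2
        + e.2.2.2 * boxSum M (fun a b => (b + 1) * G a (b + 1) (z.1, z.2.1)) z.2.2.1 z.2.2.2 := by
  have hM₁' (b : ℤ) : G M b (z.1, z.2.1) = 0 := by simp [hM₁]
  have hM₂' (a : ℤ) : G a M (z.1, z.2.1) = 0 := by simp [hM₂]
  calc _ = ∑ a ∈ range M, ∑ b ∈ range M, fderiv ℝ (fun z : ℝ × ℝ × ℝ × ℝ =>
        G a b (z.1, z.2.1) * z.2.2.1 ^ a * z.2.2.2 ^ b) z e := by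
        simp only [boxSum]
        rw [fderiv_fun_sum fun a _ => by fun_prop, _root_.sum_apply]
        refine sum_congr rfl fun a _ => ?_
        rw [fderiv_fun_sum fun b _ => by fun_prop, _root_.sum_apply]
    _ = _ := by
        have hp := sum_mul_deriv_pow_left_eq_boxSum M (fun a b => G a b (z.1, z.2.1))
          z.2.2.1 z.2.2.2 hM₁'
        have hr := sum_mul_deriv_pow_right_eq_boxSum M (fun a b => G a b (z.1, z.2.1))
          z.2.2.1 z.2.2.2 hM₂'
        rw [← hp, ← hr]
        simp only [fderiv_coeff_mul_pow_mul_pow_apply (hG _ _), boxSum, mul_sum,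
          ← sum_add_distrib]
        exact sum_congr rfl fun _ _ => sum_congr rfl fun _ _ => by ring

lemma fderiv_Ham_apply {V : ℝ × ℝ → ℝ} (hV : Differentiable ℝ V) (z e : ℝ × ℝ × ℝ × ℝ) :
    fderiv ℝ (Ham V) z e =
      2 * z.2.2.1 * e.2.2.1 + 2 * z.2.2.2 * e.2.2.2 + fderiv ℝ V (z.1, z.2.1) (e.1, e.2.1) := by
  have h : HasFDerivAt (Ham V) _ z :=
    (((hasFDerivAt_momentum z).fst.pow 2).add ((hasFDerivAt_momentum z).snd.pow 2)).add
      ((hV _).hasFDerivAt.comp z (hasFDerivAt_position z))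
  rw [h.fderiv]
  simp only [Nat.add_one_sub_one, pow_one, nsmul_eq_mul, Nat.cast_ofNat, add_apply, smul_apply,
    ContinuousLinearMap.comp_apply, ContinuousLinearMap.coe_snd', ContinuousLinearMap.coe_fst',
    smul_eq_mul, ContinuousLinearMap.prod_apply]

lemma pdx_zero : pdx 0 = 0 := by
  ext q; simp [pdx]

lemma pdy_zero : pdy 0 = 0 := by
  ext q; simp [pdy]

/-- The coefficient of `p₁^a p₂^b` in `{H, Σ_{a,b} g_{a,b}(x, y) p₁^a p₂^b}`. -/
def bracketCoeff (V : ℝ × ℝ → ℝ) (g : ℤ → ℤ → ℝ × ℝ → ℝ) (q : ℝ × ℝ) (a b : ℤ) : ℝ :=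
  2 * (pdx (g (a - 1) b) q + pdy (g a (b - 1)) q)
    - (a + 1) * g (a + 1) b q * pdx V q - (b + 1) * g a (b + 1) q * pdy V q

lemma pbr_Ham_boxSum {V : ℝ × ℝ → ℝ} (hV : Differentiable ℝ V) {n : ℕ}
    {g : ℤ → ℤ → ℝ × ℝ → ℝ} (hg : ∀ a b, Differentiable ℝ (g a b))
    (hg₀ : ∀ a b : ℤ, (a < 0 ∨ b < 0 ∨ (n : ℤ) < a + b) → g a b = 0) (z : ℝ × ℝ × ℝ × ℝ) :
    pbr (Ham V) (fun z => boxSum (n + 2) (fun a b => g a b (z.1, z.2.1)) z.2.2.1 z.2.2.2) z =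
      boxSum (n + 2) (bracketCoeff V g (z.1, z.2.1)) z.2.2.1 z.2.2.2 := by
  obtain ⟨x, y, p, r⟩ := z
  have hpdx {a b : ℤ} (h : a < 0 ∨ b < 0 ∨ (n : ℤ) < a + b) (q : ℝ × ℝ) : pdx (g a b) q = 0 := by
    rw [hg₀ a b h, pdx_zero, Pi.zero_apply]
  have hpdy {a b : ℤ} (h : a < 0 ∨ b < 0 ∨ (n : ℤ) < a + b) (q : ℝ × ℝ) : pdy (g a b) q = 0 := by
    rw [hg₀ a b h, pdy_zero, Pi.zero_apply]
  have hx := mul_boxSum_eq_shift_left (n + 2) (fun a b => pdx (g a b) (x, y)) p r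
    (fun b => hpdx (by omega) _) (fun b => hpdx (by omega) _)
  have hy := mul_boxSum_eq_shift_right (n + 2) (fun a b => pdy (g a b) (x, y)) p r
    (fun a => hpdy (by omega) _) (fun a => hpdy (by omega) _)
  have hlin : boxSum (n + 2) (bracketCoeff V g (x, y)) p r =
      2 * boxSum (n + 2) (fun a b => pdx (g (a - 1) b) (x, y)) p r
        + 2 * boxSum (n + 2) (fun a b => pdy (g a (b - 1)) (x, y)) p r
        - pdx V (x, y) * boxSum (n + 2) (fun a b => (a + 1) * g (a + 1) b (x, y)) p r
        - pdy V (x, y) * boxSum (n + 2) (fun a b => (b + 1) * g a (b + 1) (x, y)) p r := by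
    simp only [boxSum, bracketCoeff, mul_sum, ← sum_add_distrib, ← sum_sub_distrib]
    exact sum_congr rfl fun _ _ => sum_congr rfl fun _ _ => by ring
  have h0 : boxSum (n + 2) (fun _ _ => 0) p r = 0 := by simp [boxSum]
  simp only [pbr, fderiv_Ham_apply hV,
    fderiv_boxSum_apply (M := n + 2) hg (fun b => hg₀ _ b (by omega))
      (fun a => hg₀ a _ (by omega)),
    Prod.mk_zero_zero, map_zero, h0]
  simp only [pdx, pdy] at hx hy hlin ⊢
  linear_combination 2 * hx + 2 * hy - hlin

lemma bracketCoeff_eq_zero_of_lt {V : ℝ × ℝ → ℝ} {n : ℕ} {g : ℤ → ℤ → ℝ × ℝ → ℝ}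
    (hg₀ : ∀ a b : ℤ, (a < 0 ∨ b < 0 ∨ (n : ℤ) < a + b) → g a b = 0) (q : ℝ × ℝ) {a b : ℤ}
    (hab : (n : ℤ) + 1 < a + b) : bracketCoeff V g q a b = 0 := by
  simp [bracketCoeff, hg₀ (a - 1) b (by omega), hg₀ a (b - 1) (by omega),
    hg₀ (a + 1) b (by omega), hg₀ a (b + 1) (by omega), pdx_zero, pdy_zero]

lemma Xfun_eq_boxSum {N : ℕ} {f : ℤ → ℤ → ℝ × ℝ → ℝ}
    (hzero : ∀ j k : ℤ, (j < 0 ∨ k < 0 ∨ (N : ℤ) < j + k) → f j k = 0) (z : ℝ × ℝ × ℝ × ℝ) :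
    Xfun N f z = boxSum (N + 2) (fun a b => f a (N - a - b) (z.1, z.2.1)) z.2.2.1 z.2.2.2 := by
  rw [Xfun, boxSum, sum_sigma', ← sum_product']
  refine sum_bij_ne_zero (fun x _ _ => (x.2, N - x.1 - x.2)) ?_ ?_ ?_ ?_
  · rintro ⟨k, j⟩ hx -
    simp only [mem_sigma, mem_range] at hx
    simp only [mem_product, mem_range]
    omega
  · rintro ⟨k, j⟩ hx - ⟨k', j'⟩ hx' - h
    simp only [mem_sigma, mem_range] at hx hx'
    simp only [Prod.mk.injEq] at h
    obtain rfl : k = k' := by omega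
    obtain rfl := h.1
    rfl
  · rintro ⟨a, b⟩ hx hne
    have hab : a + b ≤ N := by
      by_contra hlt
      exact hne (by simp [hzero a (N - a - b) (by omega)])
    refine ⟨⟨N - a - b, a⟩, by simp only [mem_sigma, mem_range]; omega, ?_, ?_⟩
    · have hk : ((N - a - b : ℕ) : ℤ) = N - a - b := by omega
      convert hne using 3
      · simp only [hk]
      · dsimp only; omega
    · exact Prod.ext rfl (by dsimp only; omega)
  · rintro ⟨k, j⟩ hx -
    simp only [mem_sigma, mem_range] at hx
    have hk : (N : ℤ) - j - (N - k - j : ℕ) = k := by omega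
    simp only [hk]

section Integral

variable {N : ℕ} {V : ℝ × ℝ → ℝ} {f : ℤ → ℤ → ℝ × ℝ → ℝ}

lemma pbr_Ham_Xfun (hV : Differentiable ℝ V) (hf : ∀ j k, Differentiable ℝ (f j k))
    (hzero : ∀ j k : ℤ, (j < 0 ∨ k < 0 ∨ (N : ℤ) < j + k) → f j k = 0) (z : ℝ × ℝ × ℝ × ℝ) :
    pbr (Ham V) (Xfun N f) z =
      boxSum (N + 2) (bracketCoeff V (fun a b => f a (N - a - b)) (z.1, z.2.1))
        z.2.2.1 z.2.2.2 := by
  rw [show Xfun N f = _ from funext (Xfun_eq_boxSum hzero)]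
  exact pbr_Ham_boxSum hV (fun a b => hf _ _) (fun a b h => hzero _ _ (by omega)) z

lemma bracketCoeff_eq_zero_iff (q : ℝ × ℝ) (k j : ℤ) :
    bracketCoeff V (fun a b => f a (N - a - b)) q j (N + 1 - k - j) = 0 ↔
      2 * (pdx (f (j - 1) k) q + pdy (f j k) q) =
        ((j : ℝ) + 1) * f (j + 1) (k - 2) q * pdx V q +
          ((N : ℝ) - (k : ℝ) + 2 - (j : ℝ)) * f j (k - 2) q * pdy V q := by
  have h₁ : (N : ℤ) - (j - 1) - (N + 1 - k - j) = k := by ring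
  have h₂ : (N : ℤ) - j - (N + 1 - k - j - 1) = k := by ring
  have h₃ : (N : ℤ) - (j + 1) - (N + 1 - k - j) = k - 2 := by ring
  have h₄ : (N : ℤ) - j - (N + 1 - k - j + 1) = k - 2 := by ring
  simp only [bracketCoeff, h₁, h₂, h₃, h₄]
  push_cast
  constructor <;> intro h <;> linarith

end Integral

theorem stmt_0 (N : ℕ) (V : ℝ × ℝ → ℝ) (hV : ContDiff ℝ (⊤ : ℕ∞) V)
    (f : ℤ → ℤ → ℝ × ℝ → ℝ) (hf : ∀ j k, ContDiff ℝ (⊤ : ℕ∞) (f j k))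
    (hzero : ∀ j k : ℤ, (j < 0 ∨ k < 0 ∨ (N : ℤ) < j + k) → f j k = 0) :
    (∀ z : ℝ × ℝ × ℝ × ℝ, pbr (Ham V) (Xfun N f) z = 0) ↔
      (∀ k j : ℤ, 0 ≤ k → k ≤ (N : ℤ) + 1 → 0 ≤ j → j ≤ (N : ℤ) - k + 1 →
        ∀ q : ℝ × ℝ,
          2 * (pdx (f (j - 1) k) q + pdy (f j k) q) =
            ((j : ℝ) + 1) * f (j + 1) (k - 2) q * pdx V q +
              ((N : ℝ) - (k : ℝ) + 2 - (j : ℝ)) * f j (k - 2) q * pdy V q) := by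
  simp only [pbr_Ham_Xfun (hV.differentiable (by simp))
    (fun j k => (hf j k).differentiable (by simp)) hzero, Prod.forall, forall_boxSum_eq_zero_iff]
  constructor
  · intro h k j hk₀ _ hj₀ hj₁ x y
    lift j to ℕ using hj₀
    obtain ⟨b, hb⟩ : ∃ b : ℕ, (b : ℤ) = N + 1 - k - j := ⟨_, Int.toNat_of_nonneg (by omega)⟩
    rw [← bracketCoeff_eq_zero_iff, ← hb]
    exact h x y j (by omega) b (by omega)
  · intro h x y a ha b hb
    by_cases hab : a + b ≤ N + 1
    · have hk : (b : ℤ) = N + 1 - (N + 1 - a - b) - a := by ring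
      rw [hk, bracketCoeff_eq_zero_iff]
      exact h _ a (by omega) (by omega) (by omega) (by omega) x y
    · exact bracketCoeff_eq_zero_of_lt (n := N)
        (fun a b h => hzero a (N - a - b) (by omega)) _ (by omega)
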